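/- Let θ be an A-symmetry in Aut N. Then θ α θ⁻¹ = α⁻¹ for every IA-automorphism α of N. -/

import Mathlib

/-!
Setting: `X` is an infinite set, `F` the free group on `X`, and
`N X = F/γ₃(F)` the free nilpotent group of class two on `X`.
-/

namespace FreeNilp

/-- The free nilpotent group of class two on `X`:  `F/γ₃(F)`, where
`γ₃(F) = [[F,F],F]` is the third term of the lower central series of `F`. -/
abbrev N (X : Type*) := FreeGroup X ⧸ (⊤ : Subgroup (FreeGroup X)).lowerCentralSeries 2

/-- The image in `N X` of the generator `x ∈ X`. -/
def xb {X : Type*} (x : X) : N X := QuotientGroup.mk (FreeGroup.of x)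

/-- The group of inner automorphisms `Inn G`, as a subgroup of `MulAut G`;
`MulAut.conj z` is the inner automorphism `τ_z : a ↦ z a z⁻¹`. -/
def Inn (G : Type*) [Group G] : Subgroup (MulAut G) := (MulAut.conj (G := G)).range

instance Inn.normal (G : Type*) [Group G] : (Inn G).Normal := by
  constructor
  rintro m ⟨z, rfl⟩ g
  refine ⟨g z, ?_⟩
  ext a
  simp [MulAut.conj_apply, map_mul, map_inv, mul_assoc]

/-- The outer automorphism group `Out G = Aut G / Inn G`. -/
abbrev Out (G : Type*) [Group G] := MulAut G ⧸ Inn G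

/-- The quotient homomorphism `ĥ : Aut G → Out G`. -/
def hhat (G : Type*) [Group G] : MulAut G →* Out G := QuotientGroup.mk' (Inn G)

/-- IA-automorphisms: automorphisms inducing the identity on the abelianization. -/
def IA {G : Type*} [Group G] (α : MulAut G) : Prop :=
  ∀ g : G, Abelianization.of (α g) = Abelianization.of g

/-- A-symmetries in `Aut G`: automorphisms inducing the inversion automorphism
`-id : a ↦ a⁻¹` of the abelianization. -/
def ASym {G : Type*} [Group G] (θ : MulAut G) : Prop :=
  ∀ g : G, Abelianization.of (θ g) = (Abelianization.of g)⁻¹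

/-- A-symmetries in `Out G`: elements induced by A-symmetries of `Aut G`
(equivalently, inducing inversion on the abelianization). -/
def ASymO {G : Type*} [Group G] (t : Out G) : Prop :=
  ∃ θ : MulAut G, hhat G θ = t ∧ ASym θ

/-- The endomorphism of the abelianization induced by an automorphism of `G`. -/
def abMap {G : Type*} [Group G] (σ : MulAut G) : Abelianization G →* Abelianization G :=
  Abelianization.map σ.toMonoidHom

/-- `S` is a free generating set (a "ℤ-basis", written multiplicatively) of the abelian
group `H`:  `S` generates `H`, and every `ℤ`-valued function on `S` extends to a
homomorphism `H → ℤ` (the universal property of a free abelian group with basis `S`). -/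
def IsFreeAbelianBasisOf {G : Type*} [Group G] (S : Set G) (H : Subgroup G) : Prop :=
  Subgroup.closure S = H ∧
    ∀ g : G → ℤ, ∃ φ : H →* Multiplicative ℤ,
      ∀ s, s ∈ S → ∀ h : s ∈ H, φ ⟨s, h⟩ = Multiplicative.ofAdd (g s)

/-- `σ : Aut (N X)` induces an extremal involution of the abelianization `A`:
for some free generating set `{a} ∪ C` of `A` the induced map sends `a` to `a⁻¹`
and fixes `C` pointwise. -/
def AExtremal {G : Type*} [Group G] (σ : MulAut G) : Prop :=
  ∃ (a : Abelianization G) (C : Set (Abelianization G)),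
    a ∉ C ∧ IsFreeAbelianBasisOf (insert a C) ⊤ ∧
      abMap σ a = a⁻¹ ∧ ∀ c ∈ C, abMap σ c = c

/-- A basis (free generating set) of `N X`: the image of the canonical generating set
`{x̄ : x ∈ X}` under an automorphism of `N X`. -/
def IsBasisN {X : Type*} (B : Set (N X)) : Prop :=
  ∃ e : MulAut (N X), B = ⇑e '' Set.range (xb : X → N X)

/-- Extremal involutions in `Aut (N X)`: automorphisms inverting one element of some
basis of `N X` and fixing all the other elements of that basis. -/
def IsExtremalAut {X : Type*} (ψ : MulAut (N X)) : Prop :=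
  ∃ B : Set (N X), IsBasisN B ∧
    ∃ b₀ ∈ B, ψ b₀ = b₀⁻¹ ∧ ∀ b ∈ B, b ≠ b₀ → ψ b = b

/-- The subgroup `G_b = {s ∈ Out (N X) : s̄(b̄N') = b̄N'}` of `Out (N X)`, as a set:
outer automorphisms whose induced automorphism of the abelianization fixes the image
of the generator `b`. -/
def Gb {X : Type*} (b : X) : Set (Out (N X)) :=
  {s | ∀ σ : MulAut (N X), hhat (N X) σ = s →
    Abelianization.of (σ (xb b)) = Abelianization.of (xb b)}

end FreeNilp

/-! In a group of class two every commutator is central, so an IA-automorphism has the form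
`α g = g c(g)` and an A-symmetry the form `θ g = g⁻¹ d(g)` with `c(g), d(g) ∈ N'` central. Since
`⁅a, b⁆` only depends on `a` and `b` modulo the centre, and `⁅a⁻¹, b⁻¹⁆ = ⁅a, b⁆`, both `α` and `θ`
fix `N'` pointwise. Hence `α⁻¹ g = g c(g)⁻¹`, and `h = θ⁻¹ g` is congruent to `g⁻¹` modulo `N'`,
so `α h = h c(g)⁻¹` and `θ (α h) = g c(g)⁻¹`. -/

open Subgroup
open scoped commutatorElement

section ClassTwo

variable {G : Type*} [Group G]

theorem lowerCentralSeries_quotient_lowerCentralSeries_eq_bot (n : ℕ) :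
    (⊤ : Subgroup (G ⧸ (⊤ : Subgroup G).lowerCentralSeries n)).lowerCentralSeries n = ⊥ := by
  rw [← map_top_of_surjective _ (QuotientGroup.mk'_surjective _), ← map_lowerCentralSeries,
    QuotientGroup.map_mk'_self]

theorem commutator_le_center_of_lowerCentralSeries_two_eq_bot
    (h : (⊤ : Subgroup G).lowerCentralSeries 2 = ⊥) : commutator G ≤ center G := by
  rwa [← commutator_top_right_eq_bot_iff_le_center, ← top_lowerCentralSeries_one]

theorem commutatorElement_eq_one_of_mem_center {u : G} (hu : u ∈ center G) (g : G) :
    ⁅u, g⁆ = 1 :=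
  commutatorElement_eq_one_iff_mul_comm.2 (mem_center_iff.1 hu g).symm

theorem commutatorElement_mul_mul_of_mem_center {u v : G} (hu : u ∈ center G)
    (hv : v ∈ center G) (a b : G) : ⁅a * u, b * v⁆ = ⁅a, b⁆ := by
  rw [commutatorElement_mul_left_eq_conj_mul, commutatorElement_eq_one_of_mem_center hu,
    mul_one, mul_inv_cancel, one_mul, commutatorElement_mul_right_eq_mul_conj,
    ← commutatorElement_inv v a, commutatorElement_eq_one_of_mem_center hv, inv_one, mul_one,
    mul_inv_cancel_right]

theorem inv_mul_mul_of_mem_center {z : G} (hz : z ∈ center G) (g : G) : g⁻¹ * z * g = z := by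
  rw [mul_assoc, ← mem_center_iff.1 hz g, inv_mul_cancel_left]

theorem commutatorElement_inv_inv (hG : commutator G ≤ center G) (a b : G) :
    ⁅a⁻¹, b⁻¹⁆ = ⁅a, b⁆ := by
  have hcomm (x y : G) : ⁅x, y⁆ ∈ center G :=
    hG (commutator_mem_commutator (mem_top x) (mem_top y))
  rw [commutatorElement_inv_left, inv_mul_mul_of_mem_center (hcomm _ _),
    commutatorElement_inv_left, inv_mul_mul_of_mem_center (hcomm _ _)]

theorem MonoidHom.eq_self_of_mem_commutator (σ : G →* G) (hσ : ∀ a b : G, σ ⁅a, b⁆ = ⁅a, b⁆)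
    {z : G} (hz : z ∈ commutator G) : σ z = z := by
  rw [commutator_eq_closure] at hz
  refine (closure_le (σ.eqLocus (MonoidHom.id G))).2 ?_ hz
  rintro _ ⟨a, b, rfl⟩
  exact hσ a b

end ClassTwo

namespace FreeNilp

theorem commutator_le_center (X : Type*) : commutator (N X) ≤ center (N X) :=
  commutator_le_center_of_lowerCentralSeries_two_eq_bot
    (lowerCentralSeries_quotient_lowerCentralSeries_eq_bot 2)

variable {G : Type*} [Group G]

theorem IA.inv_mul_map_mem_commutator {α : MulAut G} (hα : IA α) (g : G) :
    g⁻¹ * α g ∈ commutator G := by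
  rw [← Abelianization.ker_of, MonoidHom.mem_ker, map_mul, map_inv, hα, inv_mul_cancel]

theorem ASym.mul_map_mem_commutator {θ : MulAut G} (hθ : ASym θ) (g : G) :
    g * θ g ∈ commutator G := by
  rw [← Abelianization.ker_of, MonoidHom.mem_ker, map_mul, hθ, mul_inv_cancel]

theorem IA.map_eq_self_of_mem_commutator (hG : commutator G ≤ center G) {α : MulAut G}
    (hα : IA α) {z : G} (hz : z ∈ commutator G) : α z = z := by
  refine α.toMonoidHom.eq_self_of_mem_commutator (fun a b => ?_) hz
  calc α ⁅a, b⁆ = ⁅a * (a⁻¹ * α a), b * (b⁻¹ * α b)⁆ := by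
        rw [map_commutatorElement, mul_inv_cancel_left, mul_inv_cancel_left]
    _ = ⁅a, b⁆ := commutatorElement_mul_mul_of_mem_center
        (hG (hα.inv_mul_map_mem_commutator a)) (hG (hα.inv_mul_map_mem_commutator b)) a b

theorem ASym.map_eq_self_of_mem_commutator (hG : commutator G ≤ center G) {θ : MulAut G}
    (hθ : ASym θ) {z : G} (hz : z ∈ commutator G) : θ z = z := by
  refine θ.toMonoidHom.eq_self_of_mem_commutator (fun a b => ?_) hz
  calc θ ⁅a, b⁆ = ⁅a⁻¹ * (a * θ a), b⁻¹ * (b * θ b)⁆ := by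
        rw [map_commutatorElement, inv_mul_cancel_left, inv_mul_cancel_left]
    _ = ⁅a⁻¹, b⁻¹⁆ := commutatorElement_mul_mul_of_mem_center
        (hG (hθ.mul_map_mem_commutator a)) (hG (hθ.mul_map_mem_commutator b)) a⁻¹ b⁻¹
    _ = ⁅a, b⁆ := commutatorElement_inv_inv hG a b

theorem IA.symm_apply (hG : commutator G ≤ center G) {α : MulAut G} (hα : IA α) (g : G) :
    α.symm g = g * (g⁻¹ * α g)⁻¹ := by
  rw [MulEquiv.symm_apply_eq, map_mul, map_inv,
    hα.map_eq_self_of_mem_commutator hG (hα.inv_mul_map_mem_commutator g), mul_inv_rev, inv_inv,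
    mul_inv_cancel_left]

theorem IA.map_of_mul_mem_commutator (hG : commutator G ≤ center G) {α : MulAut G} (hα : IA α)
    {g h : G} (hhg : h * g ∈ commutator G) : α h = h * (g⁻¹ * α g)⁻¹ := by
  set c := g⁻¹ * α g
  have hc : c⁻¹ ∈ center G := inv_mem (hG (hα.inv_mul_map_mem_commutator g))
  calc α h = α (h * g) * (α g)⁻¹ := by rw [← map_inv, ← map_mul, mul_inv_cancel_right]
    _ = h * g * (g * c)⁻¹ := by
        rw [hα.map_eq_self_of_mem_commutator hG hhg, mul_inv_cancel_left]
    _ = h * c⁻¹ := by rw [mul_inv_rev, ← mem_center_iff.1 hc g⁻¹, mul_assoc, mul_inv_cancel_left]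

end FreeNilp

open FreeNilp

theorem stmt5_general (X : Type*) (θ : MulAut (N X)) (hθ : ASym θ)
    (α : MulAut (N X)) (hα : IA α) : θ * α * θ⁻¹ = α⁻¹ := by
  have hN := commutator_le_center X
  ext g
  set h := θ.symm g
  have hθh : θ h = g := θ.apply_symm_apply g
  have hhg : h * g ∈ commutator (N X) := hθh ▸ hθ.mul_map_mem_commutator h
  calc θ (α h) = θ (h * (g⁻¹ * α g)⁻¹) := by rw [hα.map_of_mul_mem_commutator hN hhg]
    _ = g * (g⁻¹ * α g)⁻¹ := by
        rw [map_mul, hθh, hθ.map_eq_self_of_mem_commutator hN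
          (inv_mem (hα.inv_mul_map_mem_commutator g))]
    _ = α.symm g := (hα.symm_apply hN g).symm

/-- If `θ` is an A-symmetry in `Aut N`, then `θ α θ⁻¹ = α⁻¹` for every
IA-automorphism `α` of `N`. -/
theorem stmt5 (X : Type*) [Infinite X] (θ : MulAut (N X)) (hθ : ASym θ)
    (α : MulAut (N X)) (hα : IA α) : θ * α * θ⁻¹ = α⁻¹ :=
  stmt5_general X θ hθ α hα
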